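/- Fix Y ∈ ℝ^{D×N} and λ_e, λ_z ≥ 0. Let m₁ be the infimum of f(C, E, Z) = ‖C‖₁ + λ_e‖E‖₁ + (λ_z/2)‖Z‖_F² over all C ∈ ℝ^{N×N}, E, Z ∈ ℝ^{D×N} subject to Y = YC + E + Z, diag(C) = 0, and Cᵀ𝟙 = 𝟙. Let m₂ be the infimum of g(C, A, E) = ‖C‖₁ + λ_e‖E‖₁ + (λ_z/2)‖Y − YA − E‖_F² over all C, A ∈ ℝ^{N×N}, E ∈ ℝ^{D×N} subject to Aᵀ𝟙 = 𝟙 and A = C − diag(C). Then m₁ = m₂; that is, the two constrained optimization problems are equivalent. -/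

import Mathlib

/-!
A feasible point `(C, E, Z)` of the first problem gives the feasible point `(C, C, E)` of the
second with the same value, since then `Z = Y - YC - E`. Conversely, from a feasible point
`(C, A, E)` of the second problem, `(A, E, Y - YA - E)` is feasible for the first, and its value
is no larger because removing the diagonal of `C` can only decrease `‖C‖₁`. So each set of
values is coinitial in the other, and the infima agree.
-/

open Matrix

/-- The entrywise ℓ¹ norm of a real matrix: sum of absolute values of entries. -/
def matL1 {m n : Type*} [Fintype m] [Fintype n] (M : Matrix m n ℝ) : ℝ :=
  ∑ i, ∑ j, |M i j|

/-- The squared Frobenius norm of a real matrix. -/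
def frobSq {m n : Type*} [Fintype m] [Fintype n] (M : Matrix m n ℝ) : ℝ :=
  ∑ i, ∑ j, (M i j) ^ 2

/-- The matrix keeping only the diagonal entries of a square matrix. -/
def diagPart {n : Type*} [DecidableEq n] (C : Matrix n n ℝ) : Matrix n n ℝ :=
  Matrix.diagonal (fun i => C i i)

lemma diagPart_sub_diagPart {n : Type*} [DecidableEq n] (C : Matrix n n ℝ) :
    diagPart (C - diagPart C) = 0 := by
  ext i j
  simp [diagPart, diagonal_apply]

lemma matL1_sub_diagPart_le {n : Type*} [Fintype n] [DecidableEq n] (C : Matrix n n ℝ) :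
    matL1 (C - diagPart C) ≤ matL1 C := by
  refine Finset.sum_le_sum fun i _ => Finset.sum_le_sum fun j _ => ?_
  rcases eq_or_ne i j with rfl | h
  · simp [diagPart]
  · simp [diagPart, diagonal_apply_ne _ h]

theorem optimization_problems_equivalent_general {D N : ℕ} (Y : Matrix (Fin D) (Fin N) ℝ)
    (lam_e lam_z : ℝ) :
    sInf {r : ℝ | ∃ (C : Matrix (Fin N) (Fin N) ℝ) (E Z : Matrix (Fin D) (Fin N) ℝ),
        Y = Y * C + E + Z ∧ diagPart C = 0 ∧
        Cᵀ.mulVec (fun _ => (1 : ℝ)) = (fun _ => (1 : ℝ)) ∧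
        r = matL1 C + lam_e * matL1 E + lam_z / 2 * frobSq Z} =
      sInf {r : ℝ | ∃ (C A : Matrix (Fin N) (Fin N) ℝ) (E : Matrix (Fin D) (Fin N) ℝ),
        Aᵀ.mulVec (fun _ => (1 : ℝ)) = (fun _ => (1 : ℝ)) ∧ A = C - diagPart C ∧
        r = matL1 C + lam_e * matL1 E + lam_z / 2 * frobSq (Y - Y * A - E)} := by
  apply csInf_eq_csInf_of_forall_exists_le
  · rintro r ⟨C, E, Z, hY, hdiag, hcol, rfl⟩
    have hZ : Y - Y * C - E = Z := by rw [sub_sub, sub_eq_iff_eq_add']; exact hY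
    exact ⟨_, ⟨C, C, E, hcol, by rw [hdiag, sub_zero], rfl⟩, by rw [hZ]⟩
  · rintro r ⟨C, A, E, hcol, rfl, rfl⟩
    refine ⟨_, ⟨C - diagPart C, E, Y - Y * (C - diagPart C) - E, by abel,
      diagPart_sub_diagPart C, hcol, rfl⟩, ?_⟩
    linarith [matL1_sub_diagPart_le C]

/-- Equivalence of the two constrained optimization problems (7) and (8) of the paper:
the infimum of `‖C‖₁ + λ_e ‖E‖₁ + (λ_z/2)‖Z‖_F²` subject to `Y = YC + E + Z`,
`diag(C) = 0`, `Cᵀ𝟙 = 𝟙` equals the infimum of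
`‖C‖₁ + λ_e ‖E‖₁ + (λ_z/2)‖Y - YA - E‖_F²` subject to `Aᵀ𝟙 = 𝟙`, `A = C - diag(C)`. -/
theorem optimization_problems_equivalent {D N : ℕ} (Y : Matrix (Fin D) (Fin N) ℝ)
    (lam_e lam_z : ℝ) (hle : 0 ≤ lam_e) (hlz : 0 ≤ lam_z) :
    sInf {r : ℝ | ∃ (C : Matrix (Fin N) (Fin N) ℝ) (E Z : Matrix (Fin D) (Fin N) ℝ),
        Y = Y * C + E + Z ∧ diagPart C = 0 ∧
        Cᵀ.mulVec (fun _ => (1 : ℝ)) = (fun _ => (1 : ℝ)) ∧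
        r = matL1 C + lam_e * matL1 E + lam_z / 2 * frobSq Z} =
      sInf {r : ℝ | ∃ (C A : Matrix (Fin N) (Fin N) ℝ) (E : Matrix (Fin D) (Fin N) ℝ),
        Aᵀ.mulVec (fun _ => (1 : ℝ)) = (fun _ => (1 : ℝ)) ∧ A = C - diagPart C ∧
        r = matL1 C + lam_e * matL1 E + lam_z / 2 * frobSq (Y - Y * A - E)} :=
  optimization_problems_equivalent_general Y lam_e lam_z
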